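/- arXiv:1904.10703 — 11 statements merged into one kernel-verified Lean document; each statement's English description precedes it below -/
import Mathlib

section
/- In a WQO X, a nonempty downwards-closed subset D is down prime (i.e., D ⊆ D₁ ∪ D₂ for downwards-closed D₁, D₂ implies D ⊆ D₁ or D ⊆ D₂) if and only if D is an ideal (nonempty, downwards-closed, and directed). -/
def DownClosed {X : Type*} [Preorder X] (D : Set X) : Prop :=
  ∀ ⦃x y : X⦄, x ∈ D → y ≤ x → y ∈ D

def IsIdeal {X : Type*} [Preorder X] (I : Set X) : Prop :=
  I.Nonempty ∧ DownClosed I ∧ DirectedOn (· ≤ ·) I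

section

variable {X : Type*} [Preorder X]

def IsDownPrime (D : Set X) : Prop :=
  ∀ D₁ D₂ : Set X, DownClosed D₁ → DownClosed D₂ → D ⊆ D₁ ∪ D₂ → D ⊆ D₁ ∨ D ⊆ D₂

theorem downClosed_compl_Ici (a : X) : DownClosed (Set.Ici a)ᶜ :=
  fun _ _ hx hyx hay => hx (hay.trans hyx)

theorem DirectedOn.isDownPrime {D : Set X} (hdir : DirectedOn (· ≤ ·) D) : IsDownPrime D := by
  intro D₁ D₂ h₁ h₂ hsub
  by_contra! hcon
  obtain ⟨a, ha, ha₁⟩ := Set.not_subset.mp hcon.1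
  obtain ⟨b, hb, hb₂⟩ := Set.not_subset.mp hcon.2
  obtain ⟨c, hc, hac, hbc⟩ := hdir a ha b hb
  rcases hsub hc with hc₁ | hc₂
  · exact ha₁ (h₁ hc₁ hac)
  · exact hb₂ (h₂ hc₂ hbc)

/-- Separate `a` and `b` by the down-closed sets of elements not above `a`, resp. not above `b`:
without a common upper bound in `D`, these two sets cover `D`. -/
theorem IsDownPrime.directedOn {D : Set X} (hprime : IsDownPrime D) : DirectedOn (· ≤ ·) D := by
  intro a ha b hb
  by_contra! hcon
  have hcover : D ⊆ (Set.Ici a)ᶜ ∪ (Set.Ici b)ᶜ := fun c hc => by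
    by_contra hc'
    simp only [Set.mem_union, Set.mem_compl_iff, Set.mem_Ici, not_or, not_not] at hc'
    exact hcon c hc hc'.1 hc'.2
  rcases hprime _ _ (downClosed_compl_Ici a) (downClosed_compl_Ici b) hcover with h | h
  · exact h ha le_rfl
  · exact h hb le_rfl

end

theorem downPrime_iff_ideal_general {X : Type*} [Preorder X]
    (D : Set X) (hne : D.Nonempty) (hD : DownClosed D) :
    (∀ D₁ D₂ : Set X, DownClosed D₁ → DownClosed D₂ →
        D ⊆ D₁ ∪ D₂ → D ⊆ D₁ ∨ D ⊆ D₂) ↔ IsIdeal D :=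
  ⟨fun hprime => ⟨hne, hD, IsDownPrime.directedOn hprime⟩,
    fun hideal => hideal.2.2.isDownPrime⟩

theorem downPrime_iff_ideal {X : Type*} [Preorder X]
    (hwqo : ∀ f : ℕ → X, ∃ i j : ℕ, i < j ∧ f i ≤ f j)
    (D : Set X) (hne : D.Nonempty) (hD : DownClosed D) :
    (∀ D₁ D₂ : Set X, DownClosed D₁ → DownClosed D₂ →
        D ⊆ D₁ ∪ D₂ → D ⊆ D₁ ∨ D ⊆ D₂) ↔ IsIdeal D :=
  downPrime_iff_ideal_general D hne hD
end

section
/- In a WQO X, a nonempty upwards-closed subset U is up prime (U ⊆ U₁ ∪ U₂ implies U ⊆ U₁ or U ⊆ U₂ for upwards-closed U₁,U₂) if and only if U is a principal filter ↑x for some x ∈ X. -/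
def UpClosed {X : Type*} [Preorder X] (U : Set X) : Prop :=
  ∀ ⦃x y : X⦄, x ∈ U → x ≤ y → y ∈ U

open Set

section

variable {X : Type*} [Preorder X]

theorem upClosed_iff_isUpperSet {U : Set X} : UpClosed U ↔ IsUpperSet U :=
  ⟨fun h _ _ hab ha => h ha hab, fun h _ _ ha hab => h hab ha⟩

def UpPrime (U : Set X) : Prop :=
  ∀ U₁ U₂ : Set X, UpClosed U₁ → UpClosed U₂ → U ⊆ U₁ ∪ U₂ → U ⊆ U₁ ∨ U ⊆ U₂

theorem upPrime_Ici (x : X) : UpPrime (Ici x) := by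
  intro U₁ U₂ h₁ h₂ hcover
  rcases hcover (le_refl x) with hx | hx
  · exact Or.inl fun _ hy => h₁ hx hy
  · exact Or.inr fun _ hy => h₂ hx hy

/-- Cover `U` by `↑x` and the upward closure of `U \ ↑x`; primality forces `U ⊆ ↑x`, since
otherwise `x` lies above some element of `U \ ↑x`, which would be strictly below `x`. -/
theorem UpPrime.eq_Ici_of_minimal {U : Set X} {x : X} (hprime : UpPrime U) (hU : UpClosed U)
    (hx : Minimal (· ∈ U) x) : U = Ici x := by
  have hcover : U ⊆ Ici x ∪ upperClosure (U \ Ici x) := fun y hy => by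
    by_cases hxy : x ≤ y
    · exact Or.inl hxy
    · exact Or.inr (subset_upperClosure ⟨hy, hxy⟩)
  rcases hprime _ _ (upClosed_iff_isUpperSet.2 (isUpperSet_Ici x))
      (upClosed_iff_isUpperSet.2 (upperClosure _).upper) hcover with hle | hle
  · exact hle.antisymm fun _ hy => hU hx.prop hy
  · obtain ⟨z, ⟨hzU, hxz⟩, hzx⟩ := mem_upperClosure.1 (hle hx.prop)
    exact absurd (hx.le_of_le hzU hzx) hxz

end

theorem upPrime_iff_principal {X : Type*} [Preorder X]
    (hwqo : ∀ f : ℕ → X, ∃ i j : ℕ, i < j ∧ f i ≤ f j)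
    (U : Set X) (hne : U.Nonempty) (hU : UpClosed U) :
    (∀ U₁ U₂ : Set X, UpClosed U₁ → UpClosed U₂ →
        U ⊆ U₁ ∪ U₂ → U ⊆ U₁ ∨ U ⊆ U₂) ↔ ∃ x : X, U = {y : X | x ≤ y} := by
  refine ⟨fun hprime => ?_, fun ⟨x, hx⟩ => hx ▸ upPrime_Ici x⟩
  have : WellQuasiOrderedLE X := ⟨hwqo⟩
  obtain ⟨x, hx⟩ := exists_minimal_of_wellFoundedLT (· ∈ U) hne
  exact ⟨x, UpPrime.eq_Ici_of_minimal hprime hU hx⟩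
end

section
/- In a WQO X, every downwards-closed subset D is a finite union of ideals of X. -/
namespace LowerSet

variable {α : Type*} [Preorder α]

instance wellFoundedLT_of_wellQuasiOrderedLE [WellQuasiOrderedLE α] :
    WellFoundedLT (LowerSet α) := by
  refine ⟨RelEmbedding.wellFounded_iff_isEmpty.2 ⟨fun s => ?_⟩⟩
  have hs : StrictAnti s := fun _ _ h => s.map_rel_iff.2 h
  choose x hx hxs using fun n =>
    Set.exists_of_ssubset (coe_ssubset_coe.2 (hs (Nat.lt_succ_self n)))
  obtain ⟨i, j, hij, hle⟩ := wellQuasiOrdered_le x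
  exact hxs i ((s (i + 1)).lower hle (hs.antitone hij (hx j)))

theorem eq_erase_sup_erase {s : LowerSet α} {a b : α} (hab : ∀ c ∈ s, a ≤ c → ¬ b ≤ c) :
    s = s.erase a ⊔ s.erase b := by
  ext x
  by_cases hax : a ≤ x <;> simp_all

theorem isIdeal_coe {s : LowerSet α} (hne : (s : Set α).Nonempty)
    (hdir : DirectedOn (· ≤ ·) (s : Set α)) : IsIdeal (s : Set α) :=
  ⟨hne, fun _ _ hx hyx => s.lower hyx hx, hdir⟩

theorem exists_finset_isIdeal_eq_biUnion [WellQuasiOrderedLE α] (s : LowerSet α) :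
    ∃ S : Finset (Set α), (∀ I ∈ S, IsIdeal I) ∧ (s : Set α) = ⋃ I ∈ S, I := by
  classical
  induction s using WellFoundedLT.induction with | _ s ih => ?_
  rcases (s : Set α).eq_empty_or_nonempty with hempty | hne
  · exact ⟨∅, by simp, by simp [hempty]⟩
  by_cases hdir : DirectedOn (· ≤ ·) (s : Set α)
  · exact ⟨{(s : Set α)}, by simpa using isIdeal_coe hne hdir, by simp⟩
  obtain ⟨a, ha, b, hb, hab⟩ : ∃ a ∈ s, ∃ b ∈ s, ∀ c ∈ s, a ≤ c → ¬ b ≤ c := by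
    simpa [DirectedOn] using hdir
  obtain ⟨S₁, hS₁, hs₁⟩ := ih _ (erase_lt.2 ha)
  obtain ⟨S₂, hS₂, hs₂⟩ := ih _ (erase_lt.2 hb)
  refine ⟨S₁ ∪ S₂, fun I hI => (Finset.mem_union.1 hI).elim (hS₁ I) (hS₂ I), ?_⟩
  rw [Finset.set_biUnion_union, ← hs₁, ← hs₂, ← coe_sup, ← eq_erase_sup_erase hab]

end LowerSet

theorem downClosed_finite_union_of_ideals {X : Type*} [Preorder X]
    (hwqo : ∀ f : ℕ → X, ∃ i j : ℕ, i < j ∧ f i ≤ f j)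
    (D : Set X) (hD : DownClosed D) :
    ∃ S : Finset (Set X), (∀ I ∈ S, IsIdeal I) ∧ D = ⋃ I ∈ S, I :=
  have : WellQuasiOrderedLE X := ⟨hwqo⟩
  LowerSet.exists_finset_isIdeal_eq_biUnion ⟨D, fun _ _ hyx hx => hD hx hyx⟩
end

section
/- Let X be a WQO and consider X* with Higman's subsequence embedding ordering ≤*. For any downwards-closed sets D₁, D₂, D ⊆ X*, one has (D₁ ∩ D₂)·D = (D₁·D) ∩ (D₂·D), where · denotes concatenation of sets of sequences. -/
/-- Higman's subsequence embedding ordering on finite sequences. -/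
def Hig {X : Type*} [Preorder X] : List X → List X → Prop :=
  List.SublistForall₂ (· ≤ ·)

def DCSeq {X : Type*} [Preorder X] (D : Set (List X)) : Prop :=
  ∀ ⦃u v : List X⦄, u ∈ D → Hig v u → v ∈ D

def conc {X : Type*} (U V : Set (List X)) : Set (List X) :=
  {w | ∃ u ∈ U, ∃ v ∈ V, w = u ++ v}

/-! If `u₁ ++ v₁ = u₂ ++ v₂` with `u₁ ∈ D₁`, `u₂ ∈ D₂`, then the shorter of `u₁, u₂` is a prefix,
hence a subsequence, of the longer one, so it lies in `D₁ ∩ D₂`; the leftover middle piece is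
absorbed into the matching suffix. -/

theorem hig_append_left {X : Type*} [Preorder X] (u t : List X) : Hig u (u ++ t) := by
  rw [Hig, List.sublistForall₂_iff]
  exact ⟨u, List.forall₂_refl u, List.sublist_append_left u t⟩

theorem DCSeq.mem_of_append_mem {X : Type*} [Preorder X] {D : Set (List X)} (hD : DCSeq D)
    {u t : List X} (h : u ++ t ∈ D) : u ∈ D :=
  hD h (hig_append_left u t)

theorem conc_inter_left_subset {X : Type*} (D₁ D₂ D : Set (List X)) :
    conc (D₁ ∩ D₂) D ⊆ conc D₁ D ∩ conc D₂ D := by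
  rintro _ ⟨u, ⟨hu₁, hu₂⟩, v, hv, rfl⟩
  exact ⟨⟨u, hu₁, v, hv, rfl⟩, ⟨u, hu₂, v, hv, rfl⟩⟩

theorem conc_inter_conc_subset {X : Type*} [Preorder X] {D₁ D₂ : Set (List X)}
    (h₁ : DCSeq D₁) (h₂ : DCSeq D₂) (D : Set (List X)) :
    conc D₁ D ∩ conc D₂ D ⊆ conc (D₁ ∩ D₂) D := by
  rintro _ ⟨⟨u₁, hu₁, v₁, hv₁, rfl⟩, ⟨u₂, hu₂, v₂, hv₂, heq⟩⟩
  rcases List.append_eq_append_iff.mp heq with ⟨t, rfl, rfl⟩ | ⟨t, rfl, rfl⟩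
  · exact ⟨u₁, ⟨hu₁, h₂.mem_of_append_mem hu₂⟩, t ++ v₂, hv₁, rfl⟩
  · exact ⟨u₂, ⟨h₁.mem_of_append_mem hu₁, hu₂⟩, t ++ v₁, hv₂, List.append_assoc _ _ _⟩

theorem concat_distrib_inter_general {X : Type*} [Preorder X]
    (D₁ D₂ D : Set (List X)) (h₁ : DCSeq D₁) (h₂ : DCSeq D₂) :
    conc (D₁ ∩ D₂) D = conc D₁ D ∩ conc D₂ D :=
  (conc_inter_left_subset D₁ D₂ D).antisymm (conc_inter_conc_subset h₁ h₂ D)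

theorem concat_distrib_inter {X : Type*} [Preorder X]
    (hwqo : ∀ f : ℕ → X, ∃ i j : ℕ, i < j ∧ f i ≤ f j)
    (D₁ D₂ D : Set (List X)) (h₁ : DCSeq D₁) (h₂ : DCSeq D₂) (h : DCSeq D) :
    conc (D₁ ∩ D₂) D = conc D₁ D ∩ conc D₂ D :=
  concat_distrib_inter_general D₁ D₂ D h₁ h₂
end

section
/- Let X be a WQO and D ⊆ X be downwards-closed. Then D* = {sequences all of whose elements are in D} is an ideal of (X*, ≤*); and for any ideal I of X, the set I+ε = {ε} ∪ {one-element sequences ⟨x⟩ with x ∈ I} is an ideal of (X*, ≤*); and the concatenation of two ideals of (X*, ≤*) is an ideal of (X*, ≤*). -/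
def IsIdealSeq {X : Type*} [Preorder X] (I : Set (List X)) : Prop :=
  I.Nonempty ∧ DCSeq I ∧ DirectedOn Hig I

def star {X : Type*} (D : Set X) : Set (List X) := {l | ∀ x ∈ l, x ∈ D}

def plusEps {X : Type*} (I : Set X) : Set (List X) :=
  {[]} ∪ {l | ∃ x ∈ I, l = [x]}

/-! Downward closure of `D*` holds because every letter of a Higman-smaller word lies below a
letter of the larger one; directedness of `D*` and of `P · Q` comes from concatenation, which is
monotone in both arguments for `≤*`; and an embedding into a concatenation `u ++ v` splits into
embeddings into `u` and into `v`, which makes `P · Q` downward closed. -/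

namespace Hig

variable {X : Type*} [Preorder X]

theorem refl (l : List X) : Hig l l :=
  refl_of (List.SublistForall₂ (· ≤ ·)) l

theorem nil_left (l : List X) : Hig [] l :=
  List.SublistForall₂.nil

theorem append_left {u v : List X} (w : List X) (h : Hig u v) : Hig u (w ++ v) := by
  induction w with
  | nil => exact h
  | cons _ _ ih => exact List.SublistForall₂.cons_right ih

theorem append {u v u' v' : List X} (hu : Hig u u') (hv : Hig v v') :
    Hig (u ++ v) (u' ++ v') := by
  induction hu with
  | nil => exact append_left _ hv
  | cons hab _ ih => exact List.SublistForall₂.cons hab ih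
  | cons_right _ ih => exact List.SublistForall₂.cons_right ih

theorem left_append (u v : List X) : Hig u (u ++ v) := by
  simpa using (refl u).append (nil_left v)

theorem right_append (u v : List X) : Hig v (u ++ v) := by
  simpa using (nil_left u).append (refl v)

theorem exists_le_of_mem {v u : List X} (h : Hig v u) {x : X} (hx : x ∈ v) :
    ∃ y ∈ u, x ≤ y := by
  induction h with
  | nil => simp at hx
  | @cons a b _ _ hab _ ih =>
    rcases List.mem_cons.1 hx with rfl | hx
    · exact ⟨b, List.mem_cons_self, hab⟩
    · obtain ⟨y, hy, hxy⟩ := ih hx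
      exact ⟨y, List.mem_cons_of_mem _ hy, hxy⟩
  | cons_right _ ih =>
    obtain ⟨y, hy, hxy⟩ := ih hx
    exact ⟨y, List.mem_cons_of_mem _ hy, hxy⟩

theorem exists_append_of_append {w u v : List X} (h : Hig w (u ++ v)) :
    ∃ w₁ w₂, w = w₁ ++ w₂ ∧ Hig w₁ u ∧ Hig w₂ v := by
  induction u generalizing w with
  | nil => exact ⟨[], w, rfl, nil_left _, h⟩
  | cons b u ih =>
    cases h with
    | nil => exact ⟨[], [], rfl, nil_left _, nil_left _⟩
    | @cons a _ _ _ hab h =>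
      obtain ⟨w₁, w₂, rfl, h₁, h₂⟩ := ih h
      exact ⟨a :: w₁, w₂, rfl, List.SublistForall₂.cons hab h₁, h₂⟩
    | cons_right h =>
      obtain ⟨w₁, w₂, rfl, h₁, h₂⟩ := ih h
      exact ⟨w₁, w₂, rfl, List.SublistForall₂.cons_right h₁, h₂⟩

end Hig

section Ideals

variable {X : Type*} [Preorder X]

theorem dcSeq_star {D : Set X} (hD : DownClosed D) : DCSeq (star D) := by
  intro u v hu hvu x hx
  obtain ⟨y, hy, hxy⟩ := hvu.exists_le_of_mem hx
  exact hD (hu y hy) hxy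

theorem directedOn_star (D : Set X) : DirectedOn Hig (star D) := by
  intro u hu v hv
  refine ⟨u ++ v, ?_, Hig.left_append u v, Hig.right_append u v⟩
  intro x hx
  rcases List.mem_append.1 hx with hx | hx
  exacts [hu x hx, hv x hx]

theorem isIdealSeq_star {D : Set X} (hD : DownClosed D) : IsIdealSeq (star D) :=
  ⟨⟨[], fun _ h => nomatch h⟩, dcSeq_star hD, directedOn_star D⟩

theorem dcSeq_plusEps {I : Set X} (hI : DownClosed I) : DCSeq (plusEps I) := by
  rintro u v (rfl | ⟨x, hx, rfl⟩) hvu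
  · cases hvu
    exact Or.inl rfl
  · cases hvu with
    | nil => exact Or.inl rfl
    | cons hyx h =>
      cases h
      exact Or.inr ⟨_, hI hx hyx, rfl⟩
    | cons_right h =>
      cases h
      exact Or.inl rfl

theorem directedOn_plusEps {I : Set X} (hI : DirectedOn (· ≤ ·) I) :
    DirectedOn Hig (plusEps I) := by
  rintro u (rfl | ⟨x, hx, rfl⟩) v hv
  · exact ⟨v, hv, Hig.nil_left v, Hig.refl v⟩
  rcases hv with rfl | ⟨y, hy, rfl⟩
  · exact ⟨[x], Or.inr ⟨x, hx, rfl⟩, Hig.refl _, Hig.nil_left _⟩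
  obtain ⟨z, hz, hxz, hyz⟩ := hI x hx y hy
  exact ⟨[z], Or.inr ⟨z, hz, rfl⟩, List.SublistForall₂.cons hxz (Hig.nil_left _),
    List.SublistForall₂.cons hyz (Hig.nil_left _)⟩

theorem isIdealSeq_plusEps {I : Set X} (hdc : DownClosed I) (hdir : DirectedOn (· ≤ ·) I) :
    IsIdealSeq (plusEps I) :=
  ⟨⟨[], Or.inl rfl⟩, dcSeq_plusEps hdc, directedOn_plusEps hdir⟩

theorem dcSeq_conc {P Q : Set (List X)} (hP : DCSeq P) (hQ : DCSeq Q) : DCSeq (conc P Q) := by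
  rintro w v ⟨u₁, hu₁, u₂, hu₂, rfl⟩ hvw
  obtain ⟨w₁, w₂, rfl, h₁, h₂⟩ := hvw.exists_append_of_append
  exact ⟨w₁, hP hu₁ h₁, w₂, hQ hu₂ h₂, rfl⟩

theorem directedOn_conc {P Q : Set (List X)} (hP : DirectedOn Hig P) (hQ : DirectedOn Hig Q) :
    DirectedOn Hig (conc P Q) := by
  rintro w ⟨u₁, hu₁, u₂, hu₂, rfl⟩ w' ⟨v₁, hv₁, v₂, hv₂, rfl⟩
  obtain ⟨a, ha, hua, hva⟩ := hP u₁ hu₁ v₁ hv₁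
  obtain ⟨b, hb, hub, hvb⟩ := hQ u₂ hu₂ v₂ hv₂
  exact ⟨a ++ b, ⟨a, ha, b, hb, rfl⟩, hua.append hub, hva.append hvb⟩

theorem isIdealSeq_conc {P Q : Set (List X)} (hP : IsIdealSeq P) (hQ : IsIdealSeq Q) :
    IsIdealSeq (conc P Q) := by
  obtain ⟨⟨p, hp⟩, hPdc, hPdir⟩ := hP
  obtain ⟨⟨q, hq⟩, hQdc, hQdir⟩ := hQ
  exact ⟨⟨p ++ q, p, hp, q, hq, rfl⟩, dcSeq_conc hPdc hQdc, directedOn_conc hPdir hQdir⟩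

end Ideals

theorem atoms_and_products_are_ideals_general {X : Type*} [Preorder X] :
    (∀ D : Set X, DownClosed D → IsIdealSeq (star D)) ∧
    (∀ I : Set X, IsIdeal I → IsIdealSeq (plusEps I)) ∧
    (∀ P Q : Set (List X), IsIdealSeq P → IsIdealSeq Q → IsIdealSeq (conc P Q)) :=
  ⟨fun _ hD => isIdealSeq_star hD,
    fun _ hI => isIdealSeq_plusEps hI.2.1 hI.2.2,
    fun _ _ hP hQ => isIdealSeq_conc hP hQ⟩

theorem atoms_and_products_are_ideals {X : Type*} [Preorder X]
    (hwqo : ∀ f : ℕ → X, ∃ i j : ℕ, i < j ∧ f i ≤ f j) :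
    (∀ D : Set X, DownClosed D → IsIdealSeq (star D)) ∧
    (∀ I : Set X, IsIdeal I → IsIdealSeq (plusEps I)) ∧
    (∀ P Q : Set (List X), IsIdealSeq P → IsIdealSeq Q → IsIdealSeq (conc P Q)) :=
  atoms_and_products_are_ideals_general
end

section
/- Let X be a WQO and x ∈ X, v ∈ X* nonempty. Then the complement of the filter ↑(x·v) in (X*, ≤*) equals (X \ ↑x)* · (X + ε) · (X* \ ↑v), where (X \ ↑x)* denotes sequences with all elements not above x and X + ε denotes sequences of length at most 1. Moreover X* \ ↑⟨x⟩ = (X \ ↑x)*. -/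
section Higman

variable {X : Type*} [Preorder X]

theorem not_hig_nil_of_ne_nil {v : List X} (hv : v ≠ []) : ¬ Hig v [] := by
  rintro ⟨⟩
  exact hv rfl

theorem hig_cons_cons_iff {x y : X} {v u : List X} :
    Hig (x :: v) (y :: u) ↔ x ≤ y ∧ Hig v u ∨ Hig (x :: v) u := by
  constructor
  · rintro (_ | ⟨hxy, hvu⟩ | hu)
    · exact .inl ⟨hxy, hvu⟩
    · exact .inr hu
  · rintro (⟨hxy, hvu⟩ | hu)
    · exact .cons hxy hvu
    · exact .cons_right hu

theorem hig_singleton_iff {x : X} {u : List X} : Hig [x] u ↔ ∃ y ∈ u, x ≤ y := by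
  induction u with
  | nil => simpa using not_hig_nil_of_ne_nil (List.cons_ne_nil x [])
  | cons y u ih =>
    rw [hig_cons_cons_iff, ih]
    simp [Hig, List.SublistForall₂.nil]

theorem Hig.of_cons {x : X} {v u : List X} (h : Hig (x :: v) u) : Hig v u :=
  List.SublistForall₂.is_trans.trans _ _ _ (List.tail_sublistForall₂_self (x :: v)) h

theorem Hig.of_append_of_forall_not_le {x : X} {v a w : List X}
    (h : Hig (x :: v) (a ++ w)) (ha : ∀ y ∈ a, ¬ x ≤ y) : Hig (x :: v) w := by
  induction a with
  | nil => exact h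
  | cons y a ih =>
    rcases hig_cons_cons_iff.mp h with ⟨hxy, -⟩ | h
    · exact absurd hxy (ha y List.mem_cons_self)
    · exact ih h fun z hz => ha z (List.mem_cons_of_mem y hz)

theorem mem_conc_of_not_hig_cons {x : X} {v u : List X} (hv : v ≠ [])
    (h : ¬ Hig (x :: v) u) :
    u ∈ conc (star {y : X | ¬ x ≤ y})
      (conc {l : List X | l.length ≤ 1} {u : List X | ¬ Hig v u}) := by
  induction u with
  | nil => exact ⟨[], by simp [_root_.star], [], ⟨[], by simp, [], not_hig_nil_of_ne_nil hv, rfl⟩, rfl⟩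
  | cons y u ih =>
    rw [hig_cons_cons_iff, not_or, not_and] at h
    by_cases hxy : x ≤ y
    · exact ⟨[], by simp [_root_.star], y :: u, ⟨[y], by simp, u, h.1 hxy, rfl⟩, rfl⟩
    · obtain ⟨a, ha, w, hw, rfl⟩ := ih h.2
      exact ⟨y :: a, List.forall_mem_cons.mpr ⟨hxy, ha⟩, w, hw, rfl⟩

theorem not_hig_cons_of_mem_conc {x : X} {v u : List X}
    (hu : u ∈ conc (star {y : X | ¬ x ≤ y})
      (conc {l : List X | l.length ≤ 1} {u : List X | ¬ Hig v u})) :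
    ¬ Hig (x :: v) u := by
  intro h
  obtain ⟨a, ha, _, ⟨b, hb, c, hc, rfl⟩, rfl⟩ := hu
  have hbc := h.of_append_of_forall_not_le ha
  match b, hb with
  | [], _ => exact hc hbc.of_cons
  | [y], _ =>
    rcases hig_cons_cons_iff.mp hbc with ⟨-, hvc⟩ | hxc
    · exact hc hvc
    · exact hc hxc.of_cons

end Higman

theorem complement_of_filter_seq_general {X : Type*} [Preorder X]
    (x : X) (v : List X) :
    ({u : List X | ¬ Hig [x] u} = star {y : X | ¬ x ≤ y}) ∧
    (v ≠ [] →
      {u : List X | ¬ Hig (x :: v) u} =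
        conc (star {y : X | ¬ x ≤ y})
          (conc {l : List X | l.length ≤ 1} {u : List X | ¬ Hig v u})) := by
  refine ⟨?_, fun hv => ?_⟩
  · ext u
    simp [_root_.star, hig_singleton_iff]
  · ext u
    exact ⟨mem_conc_of_not_hig_cons hv, not_hig_cons_of_mem_conc⟩

theorem complement_of_filter_seq {X : Type*} [Preorder X]
    (hwqo : ∀ f : ℕ → X, ∃ i j : ℕ, i < j ∧ f i ≤ f j)
    (x : X) (v : List X) :
    ({u : List X | ¬ Hig [x] u} = star {y : X | ¬ x ≤ y}) ∧
    (v ≠ [] →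
      {u : List X | ¬ Hig (x :: v) u} =
        conc (star {y : X | ¬ x ≤ y})
          (conc {l : List X | l.length ≤ 1} {u : List X | ¬ Hig v u})) :=
  complement_of_filter_seq_general x v
end

section
/- Let X be a WQO and D₁, D₂ ⊆ X downwards-closed, and P, Q downwards-closed subsets of X*. Then D₁*·P ∩ D₂*·Q = (D₁∩D₂)* · [ ((D₁*·P) ∩ Q) ∪ (P ∩ (D₂*·Q)) ] in (X*, ≤*). -/
section StarConc

variable {X : Type*} {D D₁ D₂ : Set X} {P Q U U' V V' : Set (List X)} {u v : List X}

theorem append_mem_star_iff : u ++ v ∈ star D ↔ u ∈ star D ∧ v ∈ star D := by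
  simp only [_root_.star, Set.mem_ofPred_eq, List.mem_append, or_imp, forall_and]

theorem star_inter : star (D₁ ∩ D₂) = star D₁ ∩ star D₂ := by
  ext l
  simp only [_root_.star, Set.mem_inter_iff, Set.mem_ofPred_eq, forall_and]

theorem append_mem_conc (hu : u ∈ U) (hv : v ∈ V) : u ++ v ∈ conc U V :=
  ⟨u, hu, v, hv, rfl⟩

theorem conc_mono (hU : U ⊆ U') (hV : V ⊆ V') : conc U V ⊆ conc U' V' := by
  rintro _ ⟨u, hu, v, hv, rfl⟩
  exact append_mem_conc (hU hu) (hV hv)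

theorem subset_conc_star : P ⊆ conc (star D) P := fun _ hp =>
  append_mem_conc (u := []) (fun _ h => absurd h List.not_mem_nil) hp

theorem conc_star_conc_star_subset : conc (star D) (conc (star D) P) ⊆ conc (star D) P := by
  rintro _ ⟨u, hu, _, ⟨v, hv, p, hp, rfl⟩, rfl⟩
  rw [← List.append_assoc]
  exact append_mem_conc (append_mem_star_iff.mpr ⟨hu, hv⟩) hp

theorem append_append_mem_conc_star_inter {m q : List X} (hu : u ∈ star D₁)
    (hum : u ++ m ∈ star D₂) (hmq : m ++ q ∈ P) (hq : q ∈ Q) :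
    u ++ (m ++ q) ∈ conc (star (D₁ ∩ D₂)) (P ∩ conc (star D₂) Q) := by
  obtain ⟨hu₂, hm⟩ := append_mem_star_iff.mp hum
  exact append_mem_conc (star_inter ▸ ⟨hu, hu₂⟩) ⟨hmq, append_mem_conc hm hq⟩

theorem conc_star_inter_conc_star_subset :
    conc (star D₁) P ∩ conc (star D₂) Q ⊆
      conc (star (D₁ ∩ D₂)) ((conc (star D₁) P ∩ Q) ∪ (P ∩ conc (star D₂) Q)) := by
  rintro w ⟨⟨u₁, hu₁, p, hp, rfl⟩, u₂, hu₂, q, hq, hw⟩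
  rcases List.append_eq_append_iff.mp hw with ⟨m, rfl, rfl⟩ | ⟨m, rfl, rfl⟩
  · exact conc_mono subset_rfl Set.subset_union_right
      (append_append_mem_conc_star_inter hu₁ hu₂ hp hq)
  · rw [hw, Set.inter_comm D₁, Set.union_comm, Set.inter_comm _ Q, Set.inter_comm P]
    exact conc_mono subset_rfl Set.subset_union_right
      (append_append_mem_conc_star_inter hu₂ hu₁ hq hp)

theorem conc_star_inter_subset_conc_star_inter :
    conc (star (D₁ ∩ D₂)) (conc (star D₁) P ∩ conc (star D₂) Q) ⊆
      conc (star D₁) P ∩ conc (star D₂) Q := by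
  rw [star_inter]
  exact Set.subset_inter
    ((conc_mono Set.inter_subset_left Set.inter_subset_left).trans conc_star_conc_star_subset)
    ((conc_mono Set.inter_subset_right Set.inter_subset_right).trans conc_star_conc_star_subset)

end StarConc

theorem inter_star_products_general {X : Type*}
    (D₁ D₂ : Set X)
    (P Q : Set (List X)) :
    conc (star D₁) P ∩ conc (star D₂) Q =
      conc (star (D₁ ∩ D₂)) ((conc (star D₁) P ∩ Q) ∪ (P ∩ conc (star D₂) Q)) := by
  refine conc_star_inter_conc_star_subset.antisymm ?_
  have brackets_subset : (conc (star D₁) P ∩ Q) ∪ (P ∩ conc (star D₂) Q) ⊆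
      conc (star D₁) P ∩ conc (star D₂) Q :=
    Set.union_subset (Set.inter_subset_inter_right _ subset_conc_star)
      (Set.inter_subset_inter_left _ subset_conc_star)
  exact (conc_mono subset_rfl brackets_subset).trans conc_star_inter_subset_conc_star_inter

theorem inter_star_products {X : Type*} [Preorder X]
    (hwqo : ∀ f : ℕ → X, ∃ i j : ℕ, i < j ∧ f i ≤ f j)
    (D₁ D₂ : Set X) (hD₁ : DownClosed D₁) (hD₂ : DownClosed D₂)
    (P Q : Set (List X)) (hP : DCSeq P) (hQ : DCSeq Q) :
    conc (star D₁) P ∩ conc (star D₂) Q =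
      conc (star (D₁ ∩ D₂)) ((conc (star D₁) P ∩ Q) ∪ (P ∩ conc (star D₂) Q)) :=
  inter_star_products_general D₁ D₂ P Q
end

section
/- Let X be a WQO. The ideals of the finitary powerset Pf(X) under the Hoare (domination) quasi-ordering are exactly the sets of the form Pf(D) = {finite subsets of D} for D ⊆ X downwards-closed. -/
/-- Hoare (domination) quasi-ordering on finite sets. -/
def hoare {X : Type*} [Preorder X] (S T : Finset X) : Prop :=
  ∀ x ∈ S, ∃ y ∈ T, x ≤ y

def IsIdealHoare {X : Type*} [Preorder X] (𝒥 : Set (Finset X)) : Prop :=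
  𝒥.Nonempty ∧ (∀ ⦃S T : Finset X⦄, S ∈ 𝒥 → hoare T S → T ∈ 𝒥) ∧
    DirectedOn hoare 𝒥

section Hoare

variable {X : Type*} [Preorder X]

theorem hoare_empty_left (T : Finset X) : hoare ∅ T := by
  simp [hoare]

theorem hoare_singleton_left {x : X} {T : Finset X} : hoare {x} T ↔ ∃ y ∈ T, x ≤ y := by
  simp [hoare]

theorem hoare_singleton {x y : X} : hoare {x} {y} ↔ x ≤ y := by
  simp [hoare]

theorem hoare_insert_left [DecidableEq X] {a : X} {S T : Finset X} :
    hoare (insert a S) T ↔ hoare {a} T ∧ hoare S T := by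
  simp [hoare]

theorem hoare_of_subset {S T : Finset X} (h : S ⊆ T) : hoare S T :=
  fun x hx => ⟨x, h hx, le_rfl⟩

theorem hoare_trans {S T U : Finset X} (hST : hoare S T) (hTU : hoare T U) : hoare S U := by
  intro x hx
  obtain ⟨y, hy, hxy⟩ := hST x hx
  obtain ⟨z, hz, hyz⟩ := hTU y hy
  exact ⟨z, hz, hxy.trans hyz⟩

theorem DownClosed.coe_subset_of_hoare {D : Set X} (hD : DownClosed D) {S T : Finset X}
    (hS : ↑S ⊆ D) (hTS : hoare T S) : ↑T ⊆ D := by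
  intro x hx
  obtain ⟨y, hy, hxy⟩ := hTS x hx
  exact hD (hS hy) hxy

theorem DownClosed.isIdealHoare {D : Set X} (hD : DownClosed D) :
    IsIdealHoare {S : Finset X | ↑S ⊆ D} := by
  classical
  refine ⟨⟨∅, by simp⟩, fun S T hS hTS => hD.coe_subset_of_hoare hS hTS, ?_⟩
  intro S hS T hT
  exact ⟨S ∪ T, by simpa using And.intro hS hT,
    hoare_of_subset Finset.subset_union_left, hoare_of_subset Finset.subset_union_right⟩

end Hoare

namespace IsIdealHoare

variable {X : Type*} [Preorder X] {𝒥 : Set (Finset X)}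

theorem downClosed_setOf_singleton_mem (h𝒥 : IsIdealHoare 𝒥) :
    DownClosed {x : X | {x} ∈ 𝒥} :=
  fun _ _ hx hyx => h𝒥.2.1 hx (hoare_singleton.2 hyx)

theorem singleton_mem {S : Finset X} (h𝒥 : IsIdealHoare 𝒥) (hS : S ∈ 𝒥) {x : X} (hx : x ∈ S) :
    {x} ∈ 𝒥 :=
  h𝒥.2.1 hS (hoare_singleton_left.2 ⟨x, hx, le_rfl⟩)

theorem mem_of_forall_singleton_mem (h𝒥 : IsIdealHoare 𝒥) {S : Finset X}
    (hS : ∀ x ∈ S, {x} ∈ 𝒥) : S ∈ 𝒥 := by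
  classical
  obtain ⟨⟨S₀, hS₀⟩, hdown, hdir⟩ := h𝒥
  suffices ∃ T ∈ 𝒥, hoare S T from
    let ⟨T, hT, hST⟩ := this; hdown hT hST
  induction S using Finset.induction with
  | empty => exact ⟨S₀, hS₀, hoare_empty_left S₀⟩
  | insert a S _ ih =>
    obtain ⟨T, hT, hST⟩ := ih fun x hx => hS x (Finset.mem_insert_of_mem hx)
    obtain ⟨U, hU, hTU, haU⟩ := hdir T hT {a} (hS a (Finset.mem_insert_self a S))
    exact ⟨U, hU, hoare_insert_left.2 ⟨haU, hoare_trans hST hTU⟩⟩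

theorem eq_setOf_coe_subset (h𝒥 : IsIdealHoare 𝒥) :
    𝒥 = {S : Finset X | ↑S ⊆ {x : X | {x} ∈ 𝒥}} := by
  ext S
  exact ⟨fun hS _ hx => h𝒥.singleton_mem hS hx, fun hS => h𝒥.mem_of_forall_singleton_mem hS⟩

end IsIdealHoare

theorem ideals_of_finitary_powerset_general {X : Type*} [Preorder X]
    (𝒥 : Set (Finset X)) :
    IsIdealHoare 𝒥 ↔ ∃ D : Set X, DownClosed D ∧ 𝒥 = {S : Finset X | ↑S ⊆ D} := by
  constructor
  · intro h𝒥
    exact ⟨_, h𝒥.downClosed_setOf_singleton_mem, h𝒥.eq_setOf_coe_subset⟩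
  · rintro ⟨D, hD, rfl⟩
    exact hD.isIdealHoare

theorem ideals_of_finitary_powerset {X : Type*} [Preorder X]
    (hwqo : ∀ f : ℕ → X, ∃ i j : ℕ, i < j ∧ f i ≤ f j)
    (𝒥 : Set (Finset X)) :
    IsIdealHoare 𝒥 ↔ ∃ D : Set X, DownClosed D ∧ 𝒥 = {S : Finset X | ↑S ⊆ D} :=
  ideals_of_finitary_powerset_general 𝒥
end

section
/- Let (X,≤) be a WQO and ≤' an extension of ≤ (i.e., ≤ ⊆ ≤'). Then the ideals of (X, ≤') are exactly the downward closures under ≤' of the ideals of (X, ≤). -/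
def IsIdealRel {X : Type*} (r : X → X → Prop) (I : Set X) : Prop :=
  I.Nonempty ∧ (∀ ⦃x y : X⦄, x ∈ I → r y x → y ∈ I) ∧ DirectedOn r I

/-!
A `≤'`-ideal `J` is `≤`-downward closed. In a wqo, strict descent of lower sets is well founded,
and a lower set that is not directed splits into two strictly smaller ones (remove the upward
closure of either of two elements with no common upper bound); hence `J` is a finite union of
`≤`-ideals. Picking in `J` a `≤'`-upper bound of one witness per piece shows that some piece `I`
is `≤'`-cofinal in `J`, i.e. `J = ↓'I`.
-/

section

variable {α : Type*}

theorem downClosed_iff_isLowerSet [Preorder α] {s : Set α} : DownClosed s ↔ IsLowerSet s :=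
  ⟨fun h _ _ hba ha => h ha hba, fun h _ _ hx hyx => h hyx hx⟩

theorem isIdeal_iff_order_isIdeal [Preorder α] {s : Set α} : IsIdeal s ↔ Order.IsIdeal s :=
  ⟨fun ⟨hne, hdown, hdir⟩ => ⟨downClosed_iff_isLowerSet.1 hdown, hne, hdir⟩,
    fun ⟨hdown, hne, hdir⟩ => ⟨hne, downClosed_iff_isLowerSet.2 hdown, hdir⟩⟩

instance LowerSet.wellFoundedLT [Preorder α] [WellQuasiOrderedLE α] :
    WellFoundedLT (LowerSet α) := by
  rw [WellFoundedLT, isWellFounded_iff, RelEmbedding.wellFounded_iff_isEmpty]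
  refine ⟨fun f => ?_⟩
  have hf : StrictAnti f := fun _ _ h => f.map_rel_iff.2 h
  choose x hx hx' using fun n => Set.exists_of_ssubset (hf (Nat.lt_succ_self n))
  obtain ⟨i, j, hij, hle⟩ := wellQuasiOrdered_le x
  exact hx' i ((f (i + 1)).lower hle (hf.antitone hij (hx j)))

theorem LowerSet.exists_lt_lt_eq_sup_of_not_directedOn [Preorder α] {D : LowerSet α}
    (hD : ¬ DirectedOn (· ≤ ·) (D : Set α)) :
    ∃ D₁ D₂ : LowerSet α, D₁ < D ∧ D₂ < D ∧ D = D₁ ⊔ D₂ := by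
  simp only [DirectedOn, not_forall, not_exists, not_and] at hD
  obtain ⟨a, ha, b, hb, hab⟩ := hD
  refine ⟨D ⊓ (UpperSet.Ici a).compl, D ⊓ (UpperSet.Ici b).compl, ?_, ?_, ?_⟩
  · exact (Set.ssubset_iff_of_subset inf_le_left).2 ⟨a, ha, by simp⟩
  · exact (Set.ssubset_iff_of_subset inf_le_left).2 ⟨b, hb, by simp⟩
  · ext x
    simp only [LowerSet.coe_sup, LowerSet.coe_inf, UpperSet.coe_compl, UpperSet.coe_Ici]
    constructor
    · intro hx
      by_cases hax : a ≤ x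
      · exact Or.inr ⟨hx, fun hbx => hab x hx hax hbx⟩
      · exact Or.inl ⟨hx, hax⟩
    · rintro (hx | hx) <;> exact hx.1

theorem IsLowerSet.exists_finset_isIdeal_eq_biUnion [Preorder α] [WellQuasiOrderedLE α]
    {s : Set α} (hs : IsLowerSet s) :
    ∃ S : Finset (Set α), (∀ I ∈ S, Order.IsIdeal I) ∧ s = ⋃ I ∈ S, I := by
  classical
  suffices ∀ D : LowerSet α,
      ∃ S : Finset (Set α), (∀ I ∈ S, Order.IsIdeal I) ∧ (D : Set α) = ⋃ I ∈ S, I from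
    this ⟨s, hs⟩
  intro D
  induction D using WellFoundedLT.induction with
  | _ D ih =>
  rcases (D : Set α).eq_empty_or_nonempty with hempty | hne
  · exact ⟨∅, by simp, by simp [hempty]⟩
  by_cases hdir : DirectedOn (· ≤ ·) (D : Set α)
  · exact ⟨{(D : Set α)}, by simpa using ⟨D.lower, hne, hdir⟩, by simp⟩
  obtain ⟨D₁, D₂, h₁, h₂, rfl⟩ := LowerSet.exists_lt_lt_eq_sup_of_not_directedOn hdir
  obtain ⟨S₁, hS₁, hD₁⟩ := ih D₁ h₁
  obtain ⟨S₂, hS₂, hD₂⟩ := ih D₂ h₂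
  refine ⟨S₁ ∪ S₂, fun I hI => (Finset.mem_union.1 hI).elim (hS₁ I) (hS₂ I), ?_⟩
  rw [LowerSet.coe_sup, hD₁, hD₂, Finset.set_biUnion_union]

theorem DirectedOn.exists_forall_rel_of_finset {r : α → α → Prop} [IsTrans α r] {s : Set α}
    (hs : DirectedOn r s) (hne : s.Nonempty) {ι : Type*} (t : Finset ι) {g : ι → α}
    (hg : ∀ i ∈ t, g i ∈ s) : ∃ z ∈ s, ∀ i ∈ t, r (g i) z := by
  classical
  induction t using Finset.induction_on with
  | empty => exact hne.imp fun z hz => ⟨hz, by simp⟩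
  | insert i t _ ih =>
    obtain ⟨z, hz, hrz⟩ := ih fun j hj => hg j (Finset.mem_insert_of_mem hj)
    obtain ⟨z', hz', hiz', hzz'⟩ := hs (g i) (hg i (Finset.mem_insert_self i t)) z hz
    refine ⟨z', hz', fun j hj => ?_⟩
    rcases Finset.mem_insert.1 hj with rfl | hj
    · exact hiz'
    · exact _root_.trans (hrz j hj) hzz'

def relLowerClosure (r : α → α → Prop) (s : Set α) : Set α := {y | ∃ x ∈ s, r y x}

theorem DirectedOn.exists_subset_relLowerClosure_of_subset_biUnion {r : α → α → Prop}
    [IsTrans α r] {s : Set α} (hs : DirectedOn r s) (hne : s.Nonempty) {ι : Type*} {t : Finset ι}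
    {f : ι → Set α} (hcover : s ⊆ ⋃ i ∈ t, f i) : ∃ i ∈ t, s ⊆ relLowerClosure r (f i) := by
  have := hne.to_type
  by_contra! h
  choose! w hws hw using fun i hi => Set.not_subset.1 (h i hi)
  obtain ⟨z, hz, hwz⟩ := hs.exists_forall_rel_of_finset hne t hws
  obtain ⟨i, hi, hzi⟩ := Set.mem_iUnion₂.1 (hcover hz)
  exact hw i hi ⟨z, hzi, hwz i hi⟩

theorem Order.IsIdeal.isIdealRel_relLowerClosure [Preorder α] {r : α → α → Prop} [IsTrans α r]
    (hle : ∀ ⦃x y : α⦄, x ≤ y → r x y) {I : Set α} (hI : Order.IsIdeal I) :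
    IsIdealRel r (relLowerClosure r I) := by
  refine ⟨hI.Nonempty.imp fun x hx => ⟨x, hx, hle le_rfl⟩, ?_, ?_⟩
  · rintro x y ⟨z, hz, hxz⟩ hyx
    exact ⟨z, hz, _root_.trans hyx hxz⟩
  · rintro y₁ ⟨x₁, hx₁, h₁⟩ y₂ ⟨x₂, hx₂, h₂⟩
    obtain ⟨x, hx, h₁x, h₂x⟩ := hI.Directed x₁ hx₁ x₂ hx₂
    exact ⟨x, ⟨x, hx, hle le_rfl⟩, _root_.trans h₁ (hle h₁x), _root_.trans h₂ (hle h₂x)⟩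

end

theorem ideals_under_extension {X : Type*} [Preorder X]
    (hwqo : ∀ f : ℕ → X, ∃ i j : ℕ, i < j ∧ f i ≤ f j)
    (le' : X → X → Prop)
    (htrans : ∀ ⦃x y z : X⦄, le' x y → le' y z → le' x z)
    (hext : ∀ ⦃x y : X⦄, x ≤ y → le' x y)
    (J : Set X) :
    IsIdealRel le' J ↔ ∃ I : Set X, IsIdeal I ∧ J = {y : X | ∃ x ∈ I, le' y x} := by
  have : WellQuasiOrderedLE X := ⟨hwqo⟩
  have : IsTrans X le' := ⟨htrans⟩
  constructor
  · rintro ⟨hne, hdown, hdir⟩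
    have hJ : IsLowerSet J := fun _ _ hyx hx => hdown hx (hext hyx)
    obtain ⟨S, hS, hJS⟩ := hJ.exists_finset_isIdeal_eq_biUnion
    obtain ⟨I, hIS, hJI⟩ :=
      hdir.exists_subset_relLowerClosure_of_subset_biUnion hne (f := id) hJS.subset
    have hIJ : I ⊆ J := hJS ▸ Set.subset_biUnion_of_mem (u := id) hIS
    refine ⟨I, isIdeal_iff_order_isIdeal.2 (hS I hIS), hJI.antisymm ?_⟩
    rintro y ⟨x, hx, hyx⟩
    exact hdown (hIJ hx) hyx
  · rintro ⟨I, hI, rfl⟩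
    exact (isIdeal_iff_order_isIdeal.1 hI).isIdealRel_relLowerClosure hext
end

section
/- Let (X,≤) be a WQO and E an equivalence relation on X compatible with ≤, meaning ≤∘E = E∘≤ as relations. Then ≤_E := ≤∘E is a quasi-order (reflexive and transitive), and for any two ideals I₁, I₂ of (X,≤): the E-closure of I₁ intersected with the E-closure of I₂ equals the E-closure of (I₁ ∩ E-closure(I₂)). -/
/-- Closure of a set under an equivalence relation `E`. -/
def Ecl {X : Type*} (E : X → X → Prop) (S : Set X) : Set X :=
  {y | ∃ x ∈ S, E x y}

/-!
Transitivity of `≤ ∘ E` comes from using compatibility to rewrite the middle `E ∘ ≤` as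
`≤ ∘ E`. A point of `Ecl E I₁ ∩ Ecl E I₂` is `E`-related to some `a ∈ I₁`, and then `a` itself
lies in `Ecl E I₂` because `E` is symmetric and transitive.
-/

namespace Relation

variable {α : Type*} {r p : α → α → Prop}

theorem comp_refl (hr : ∀ x, r x x) (hp : ∀ x, p x x) (x : α) : Comp r p x x :=
  ⟨x, hr x, hp x⟩

theorem comp_trans_of_comp_le (hr : ∀ ⦃x y z⦄, r x y → r y z → r x z)
    (hp : ∀ ⦃x y z⦄, p x y → p y z → p x z) (hpr : ∀ x z, Comp p r x z → Comp r p x z)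
    {x₁ x₂ x₃ : α} (h₁₂ : Comp r p x₁ x₂) (h₂₃ : Comp r p x₂ x₃) : Comp r p x₁ x₃ := by
  obtain ⟨y, hx₁y, hyx₂⟩ := h₁₂
  obtain ⟨z, hx₂z, hzx₃⟩ := h₂₃
  obtain ⟨w, hyw, hwz⟩ := hpr y z ⟨x₂, hyx₂, hx₂z⟩
  exact ⟨w, hr hx₁y hyw, hp hwz hzx₃⟩

end Relation

theorem Ecl_inter_Ecl_eq_Ecl_inter {X : Type*} {E : X → X → Prop} (hE : Equivalence E)
    (S T : Set X) :
    Ecl E S ∩ Ecl E T = Ecl E (S ∩ Ecl E T) := by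
  ext y
  constructor
  · rintro ⟨⟨a, haS, hay⟩, b, hbT, hby⟩
    exact ⟨a, ⟨haS, b, hbT, hE.trans hby (hE.symm hay)⟩, hay⟩
  · rintro ⟨a, ⟨haS, b, hbT, hba⟩, hay⟩
    exact ⟨⟨a, haS, hay⟩, b, hbT, hE.trans hba hay⟩

theorem quotient_qo_and_ideal_intersections_general {X : Type*} [Preorder X]
    (E : X → X → Prop) (hE : Equivalence E)
    (hcomp : ∀ x z : X, (∃ y, x ≤ y ∧ E y z) ↔ (∃ y, E x y ∧ y ≤ z)) :
    (∀ x : X, ∃ y, x ≤ y ∧ E y x) ∧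
    (∀ x₁ x₂ x₃ : X, (∃ y, x₁ ≤ y ∧ E y x₂) → (∃ y, x₂ ≤ y ∧ E y x₃) →
      (∃ y, x₁ ≤ y ∧ E y x₃)) ∧
    (∀ I₁ I₂ : Set X, IsIdeal I₁ → IsIdeal I₂ →
      Ecl E I₁ ∩ Ecl E I₂ = Ecl E (I₁ ∩ Ecl E I₂)) :=
  ⟨Relation.comp_refl (r := (· ≤ ·)) le_refl hE.refl,
    fun _ _ _ => Relation.comp_trans_of_comp_le (r := (· ≤ ·)) (p := E) (fun _ _ _ => le_trans)
      (fun _ _ _ => hE.trans) fun x z => (hcomp x z).mpr,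
    fun I₁ I₂ _ _ => Ecl_inter_Ecl_eq_Ecl_inter hE I₁ I₂⟩

theorem quotient_qo_and_ideal_intersections {X : Type*} [Preorder X]
    (hwqo : ∀ f : ℕ → X, ∃ i j : ℕ, i < j ∧ f i ≤ f j)
    (E : X → X → Prop) (hE : Equivalence E)
    (hcomp : ∀ x z : X, (∃ y, x ≤ y ∧ E y z) ↔ (∃ y, E x y ∧ y ≤ z)) :
    (∀ x : X, ∃ y, x ≤ y ∧ E y x) ∧
    (∀ x₁ x₂ x₃ : X, (∃ y, x₁ ≤ y ∧ E y x₂) → (∃ y, x₂ ≤ y ∧ E y x₃) →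
      (∃ y, x₁ ≤ y ∧ E y x₃)) ∧
    (∀ I₁ I₂ : Set X, IsIdeal I₁ → IsIdeal I₂ →
      Ecl E I₁ ∩ Ecl E I₂ = Ecl E (I₁ ∩ Ecl E I₂)) :=
  quotient_qo_and_ideal_intersections_general E hE hcomp
end

section
/- Let X be a WQO and Y ⊆ X. An ideal I of X satisfies I = ↓_X(I ∩ Y) if and only if there exists a directed subset Δ ⊆ Y with I = ↓_X Δ. -/
def dcl {X : Type*} [Preorder X] (S : Set X) : Set X :=
  {y | ∃ x ∈ S, y ≤ x}

section

variable {X : Type*} [Preorder X]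

theorem DirectedOn.of_subset_of_subset_dcl {I T : Set X} (hI : DirectedOn (· ≤ ·) I)
    (hTI : T ⊆ I) (hIT : I ⊆ dcl T) : DirectedOn (· ≤ ·) T := by
  intro a ha b hb
  obtain ⟨c, hc, hac, hbc⟩ := hI a (hTI ha) b (hTI hb)
  obtain ⟨d, hd, hcd⟩ := hIT hc
  exact ⟨d, hd, hac.trans hcd, hbc.trans hcd⟩

theorem dcl_dcl_inter_of_subset {Δ Y : Set X} (hΔY : Δ ⊆ Y) : dcl (dcl Δ ∩ Y) = dcl Δ := by
  apply subset_antisymm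
  · rintro x ⟨d, ⟨⟨e, he, hde⟩, -⟩, hxd⟩
    exact ⟨e, he, hxd.trans hde⟩
  · rintro x ⟨d, hd, hxd⟩
    exact ⟨d, ⟨⟨d, hd, le_rfl⟩, hΔY hd⟩, hxd⟩

end

theorem adherence_characterizations_general {X : Type*} [Preorder X]
    (Y : Set X) (I : Set X) (hI : IsIdeal I) :
    I = dcl (I ∩ Y) ↔ ∃ Δ : Set X, Δ ⊆ Y ∧ DirectedOn (· ≤ ·) Δ ∧ I = dcl Δ := by
  constructor
  · intro h
    exact ⟨I ∩ Y, Set.inter_subset_right,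
      hI.2.2.of_subset_of_subset_dcl Set.inter_subset_left h.le, h⟩
  · rintro ⟨Δ, hΔY, -, rfl⟩
    exact (dcl_dcl_inter_of_subset hΔY).symm

theorem adherence_characterizations {X : Type*} [Preorder X]
    (hwqo : ∀ f : ℕ → X, ∃ i j : ℕ, i < j ∧ f i ≤ f j)
    (Y : Set X) (I : Set X) (hI : IsIdeal I) :
    I = dcl (I ∩ Y) ↔ ∃ Δ : Set X, Δ ⊆ Y ∧ DirectedOn (· ≤ ·) Δ ∧ I = dcl Δ :=
  adherence_characterizations_general Y I hI
end
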